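/- Let X be a hereditarily unicoherent continuum, K an indecomposable subcontinuum of X with nonempty interior, and x a point with M_x ∩ K nonempty. Then M_x ∩ K is a composant of K; in particular M_x is not closed in X. -/

import Mathlib

/-!
Pick `y ∈ M_x ∩ K` on a nowhere dense continuum `L₀ ∋ x`. If `z ∈ M_x ∩ K` lies on a nowhere
dense continuum `L₁ ∋ x`, hereditary unicoherence makes `(L₀ ∪ L₁) ∩ K` a subcontinuum of `K`
through `y` and `z`, proper because `K` has interior. Conversely, proper subcontinua of the
indecomposable `K` are nowhere dense, so one through `y` lies in `M_x` together with `L₀`. Hence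
`M_x ∩ K` is the composant of `y` in `K`. A closed composant is the whole continuum (boundary
bumping), whereas a composant of a metric indecomposable continuum is a countable union of proper,
hence nowhere dense, subcontinua and so cannot be all of it (Baire).
-/

open Set Topology

/-- The meager composant of `x`: the union of all nowhere dense subcontinua containing `x`. -/
def MeagerComposant (X : Type) [TopologicalSpace X] (x : X) : Set X :=
  ⋃₀ {L : Set X | IsCompact L ∧ IsConnected L ∧ IsNowhereDense L ∧ x ∈ L}

/-- A continuum is hereditarily unicoherent if the intersection of any two subcontinua
is connected (possibly empty, hence preconnected). -/
def HereditarilyUnicoherent (X : Type) [TopologicalSpace X] : Prop :=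
  ∀ A B : Set X, IsCompact A → IsConnected A → IsCompact B → IsConnected B →
    IsPreconnected (A ∩ B)

/-- A subcontinuum `A` of `X` is ample if every open neighborhood of `A` contains a
subcontinuum having `A` in its interior. -/
def Ample {X : Type} [TopologicalSpace X] (A : Set X) : Prop :=
  ∀ U : Set X, IsOpen U → A ⊆ U →
    ∃ K : Set X, IsCompact K ∧ IsPreconnected K ∧ A ⊆ interior K ∧ K ⊆ U

/-- A set `C` is indecomposable if it is not the union of two proper subcontinua. -/
def IndecomposableSet {X : Type} [TopologicalSpace X] (C : Set X) : Prop :=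
  ¬ ∃ H K : Set X, IsCompact H ∧ IsConnected H ∧ IsCompact K ∧ IsConnected K ∧
    H ⊆ C ∧ K ⊆ C ∧ H ≠ C ∧ K ≠ C ∧ H ∪ K = C

/-- The composant of `y` in `K`: the union of all proper subcontinua of `K` containing `y`. -/
def Composant {X : Type} [TopologicalSpace X] (K : Set X) (y : X) : Set X :=
  ⋃₀ {L : Set X | L ⊆ K ∧ IsCompact L ∧ IsConnected L ∧ y ∈ L ∧ L ≠ K}

section General

variable {X : Type*} [TopologicalSpace X]

theorem IsNowhereDense.union {s t : Set X} (hs : IsNowhereDense s) (ht : IsNowhereDense t) :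
    IsNowhereDense (s ∪ t) := by
  rw [IsNowhereDense, closure_union, interior_union_isClosed_of_interior_empty isClosed_closure ht,
    hs]

theorem IsClosed.connectedComponentIn {F : Set X} (hF : IsClosed F) (x : X) :
    IsClosed (connectedComponentIn F x) := by
  by_cases hx : x ∈ F
  · rw [connectedComponentIn_eq_image hx]
    exact hF.isClosedEmbedding_subtypeVal.isClosedMap _ isClosed_connectedComponent
  · rw [connectedComponentIn_eq_empty hx]
    exact isClosed_empty

theorem IsPreconnected.of_union_of_inter {s t : Set X} (hst : IsPreconnected (s ∪ t))
    (hs : IsClosed s) (ht : IsClosed t) (hi : IsPreconnected (s ∩ t)) : IsPreconnected s := by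
  rw [isPreconnected_iff_subset_of_disjoint_closed] at hst hi ⊢
  intro u v hu hv hsuv huv
  have hiuv : s ∩ t ∩ (u ∩ v) = ∅ := subset_empty_iff.mp fun p hp => huv ▸ ⟨hp.1.1, hp.2⟩
  wlog htv : s ∩ t ⊆ v generalizing u v
  · have hiu := (hi u v hu hv (inter_subset_left.trans hsuv) hiuv).resolve_right htv
    exact (this v u hv hu (union_comm u v ▸ hsuv) (inter_comm u v ▸ huv)
      (inter_comm u v ▸ hiuv) hiu).symm
  -- `s ∪ t` splits into the closed sets `s ∩ u` and `(s ∩ v) ∪ t`, which meet only in `s ∩ u ∩ v`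
  have hcover : s ∪ t ⊆ s ∩ u ∪ (s ∩ v ∪ t) := fun p hp =>
    hp.elim (fun hps => (hsuv hps).imp (⟨hps, ·⟩) (Or.inl ⟨hps, ·⟩)) (Or.inr ∘ Or.inr)
  have hdisj : (s ∪ t) ∩ (s ∩ u ∩ (s ∩ v ∪ t)) = ∅ := by
    refine subset_empty_iff.mp ?_
    rintro p ⟨-, ⟨hps, hpu⟩, ⟨-, hpv⟩ | hpt⟩
    · exact huv ▸ ⟨hps, hpu, hpv⟩
    · exact huv ▸ ⟨hps, hpu, htv ⟨hps, hpt⟩⟩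
  rcases hst _ _ (hs.inter hu) ((hs.inter hv).union ht) hcover hdisj with h | h
  · exact Or.inl fun p hp => (h (Or.inl hp)).2
  · exact Or.inr fun p hp => (h (Or.inl hp)).elim (·.2) fun hpt => htv ⟨hp, hpt⟩

theorem exists_isClopen_of_connectedComponent_subset [T2Space X] [CompactSpace X] {x : X}
    {U : Set X} (hU : IsOpen U) (h : connectedComponent x ⊆ U) :
    ∃ s, IsClopen s ∧ x ∈ s ∧ s ⊆ U := by
  have hdir : Directed (· ⊇ ·) fun s : {s : Set X // IsClopen s ∧ x ∈ s} => s.1 :=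
    fun s t => ⟨⟨s.1 ∩ t.1, s.2.1.inter t.2.1, s.2.2, t.2.2⟩, inter_subset_left, inter_subset_right⟩
  have : Nonempty {s : Set X // IsClopen s ∧ x ∈ s} := ⟨⟨univ, isClopen_univ, mem_univ x⟩⟩
  obtain ⟨s, hs⟩ := exists_subset_nhds_of_isCompact hdir (fun s => s.2.1.isClosed.isCompact)
    fun p hp => hU.mem_nhds (h (connectedComponent_eq_iInter_isClopen x ▸ hp))
  exact ⟨s.1, s.2.1, s.2.2, hs⟩

/-- Boundary bumping. -/
theorem IsCompact.subset_of_connectedComponentIn_subset [T2Space X] {K U : Set X}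
    (hKc : IsCompact K) (hK : IsPreconnected K) (hU : IsOpen U) {y : X} (hy : y ∈ K ∩ closure U)
    (h : connectedComponentIn (K ∩ closure U) y ⊆ U) : K ⊆ U := by
  have : CompactSpace (K ∩ closure U : Set X) :=
    isCompact_iff_compactSpace.mp (hKc.inter_right isClosed_closure)
  obtain ⟨Z, hZ, hyZ, hZU⟩ := exists_isClopen_of_connectedComponent_subset
    (x := (⟨y, hy⟩ : (K ∩ closure U : Set X))) (hU.preimage continuous_subtype_val)
    (image_subset_iff.mp (connectedComponentIn_eq_image hy ▸ h))
  obtain ⟨W, hW, hWZ⟩ := isOpen_induced_iff.mp hZ.isOpen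
  have hZc : IsClosed (Subtype.val '' Z) :=
    (hZ.isClosed.isCompact.image continuous_subtype_val).isClosed
  -- `Z`, seen in `X`, is closed and agrees with `W ∩ U` on `K`
  have hKWU : K ∩ (W ∩ U) ⊆ Subtype.val '' Z := fun p ⟨hpK, hpW, hpU⟩ =>
    ⟨⟨p, hpK, subset_closure hpU⟩, hWZ ▸ hpW, rfl⟩
  have hcover : K ⊆ W ∩ U ∪ (Subtype.val '' Z)ᶜ := by
    rintro p -
    by_cases hpZ : p ∈ Subtype.val '' Z
    · obtain ⟨q, hqZ, rfl⟩ := hpZ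
      exact Or.inl ⟨(hWZ ▸ hqZ :), hZU hqZ⟩
    · exact Or.inr hpZ
  have hdisj : K ∩ (W ∩ U ∩ (Subtype.val '' Z)ᶜ) = ∅ :=
    subset_empty_iff.mp fun p ⟨hpK, hpWU, hpZ⟩ => hpZ (hKWU ⟨hpK, hpWU⟩)
  rcases isPreconnected_iff_subset_of_disjoint.mp hK _ _ (hW.inter hU) hZc.isOpen_compl hcover
      hdisj with hK' | hK'
  · exact fun p hp => (hK' hp).2
  · exact absurd ⟨_, hyZ, rfl⟩ (hK' hy.1)

end General

section Continua

variable {X : Type} [TopologicalSpace X] {K : Set X}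

theorem composant_subset (K : Set X) (y : X) : Composant K y ⊆ K :=
  sUnion_subset fun _ hL => hL.1

theorem composant_eq_of_isClosed [T2Space X] (hKc : IsCompact K) (hKconn : IsPreconnected K)
    {y : X} (hy : y ∈ Composant K y) (hcl : IsClosed (Composant K y)) : Composant K y = K := by
  refine (composant_subset K y).antisymm fun k hkK => by_contra fun hk => ?_
  obtain ⟨U, V, hU, hV, hCU, hkV, hUV⟩ := SeparatedNhds.of_isCompact_isCompact
    (hKc.of_isClosed_subset hcl (composant_subset K y)) isCompact_singleton
    (disjoint_singleton_right.mpr hk)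
  have hkU : k ∉ closure U := fun h => (hUV.closure_left hV).ne_of_mem h (hkV rfl) rfl
  have hyE : y ∈ K ∩ closure U := ⟨composant_subset K y hy, subset_closure (hCU hy)⟩
  set D := connectedComponentIn (K ∩ closure U) y
  have hDK : D ⊆ K := (connectedComponentIn_subset _ _).trans inter_subset_left
  have hDC : D ⊆ Composant K y := subset_sUnion_of_mem
    ⟨hDK, hKc.of_isClosed_subset ((hKc.isClosed.inter isClosed_closure).connectedComponentIn y) hDK,
      isConnected_connectedComponentIn_iff.mpr hyE, mem_connectedComponentIn hyE,
      fun h => hkU (connectedComponentIn_subset _ _ (h ▸ hkK)).2⟩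
  exact hkU (subset_closure (hKc.subset_of_connectedComponentIn_subset hKconn hU hyE
    (hDC.trans hCU) hkK))

namespace IndecomposableSet

theorem eq_or_eq_of_union (hK : IndecomposableSet K) (hKc : IsCompact K)
    (hKconn : IsPreconnected K) {C D : Set X} (hC : IsClosed C) (hD : IsClosed D)
    (hCD : C ∪ D = K) (hi : IsConnected (C ∩ D)) : C = K ∨ D = K := by
  by_contra! hne
  have hCK : C ⊆ K := hCD ▸ subset_union_left
  have hDK : D ⊆ K := hCD ▸ subset_union_right
  refine hK ⟨C, D, hKc.of_isClosed_subset hC hCK,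
    ⟨hi.nonempty.mono inter_subset_left, (hCD ▸ hKconn).of_union_of_inter hC hD hi.2⟩,
    hKc.of_isClosed_subset hD hDK, ⟨hi.nonempty.mono inter_subset_right, ?_⟩,
    hCK, hDK, hne.1, hne.2, hCD⟩
  exact (union_comm C D ▸ hCD ▸ hKconn).of_union_of_inter hD hC (inter_comm C D ▸ hi.2)

variable [T2Space X] {P : Set X}

theorem subset_closure_diff (hK : IndecomposableSet K) (hKc : IsCompact K)
    (hKconn : IsPreconnected K) (hPK : P ⊆ K) (hPc : IsCompact P) (hPconn : IsPreconnected P)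
    (hPne : P ≠ K) : K ⊆ closure (K \ P) := by
  intro u huK
  by_contra huQ
  set Q := closure (K \ P)
  have huP : u ∈ P := by_contra fun h => huQ (subset_closure ⟨huK, h⟩)
  have hQK : Q ⊆ K := closure_minimal sdiff_subset hKc.isClosed
  have hPQ : P ∪ Q = K := (union_subset hPK hQK).antisymm fun p hp =>
    (em (p ∈ P)).imp id fun h => subset_closure ⟨hp, h⟩
  have hPconn' : IsConnected P := ⟨⟨u, huP⟩, hPconn⟩
  by_cases hQconn : IsPreconnected Q
  · have hQne : Q.Nonempty :=
      (sdiff_nonempty.mpr fun h => hPne (hPK.antisymm h)).mono subset_closure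
    exact hK ⟨P, Q, hPc, hPconn', hKc.of_isClosed_subset isClosed_closure hQK, ⟨hQne, hQconn⟩,
      hPK, hQK, hPne, fun h => huQ (h ▸ huK), hPQ⟩
  -- split `Q` into two closed pieces and attach `P` to each of them
  rw [isPreconnected_iff_subset_of_fully_disjoint_closed isClosed_closure] at hQconn
  push Not at hQconn
  obtain ⟨F₁, F₂, hF₁, hF₂, hQF, hF, hQF₁, hQF₂⟩ := hQconn
  have hcover : (P ∪ Q ∩ F₁) ∪ (P ∪ Q ∩ F₂) = K := by
    rw [← union_union_distrib_left, ← inter_union_distrib_left, inter_eq_left.mpr hQF, hPQ]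
  have hinter : (P ∪ Q ∩ F₁) ∩ (P ∪ Q ∩ F₂) = P := by
    rw [← union_inter_distrib_left, inter_inter_inter_comm, hF.inter_eq, inter_empty, union_empty]
  have hfull : ∀ F, IsClosed F → P ∪ Q ∩ F = K → Q ⊆ F := fun F hF h =>
    closure_minimal (fun p hp => ((h ▸ hp.1 : p ∈ P ∪ Q ∩ F).resolve_left hp.2).2) hF
  rcases hK.eq_or_eq_of_union hKc hKconn (hPc.isClosed.union (isClosed_closure.inter hF₁))
      (hPc.isClosed.union (isClosed_closure.inter hF₂)) hcover (by rwa [hinter]) with h | h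
  exacts [hQF₁ (hfull F₁ hF₁ h), hQF₂ (hfull F₂ hF₂ h)]

theorem isNowhereDense_preimage_val (hK : IndecomposableSet K) (hKc : IsCompact K)
    (hKconn : IsPreconnected K) (hPK : P ⊆ K) (hPc : IsCompact P) (hPconn : IsPreconnected P)
    (hPne : P ≠ K) : IsNowhereDense (Subtype.val ⁻¹' P : Set K) := by
  rw [(hPc.isClosed.preimage continuous_subtype_val).isNowhereDense_iff,
    eq_empty_iff_forall_notMem]
  intro z hz
  obtain ⟨W, hW, hWP⟩ := isOpen_induced_iff.mp (isOpen_interior (s := (Subtype.val ⁻¹' P : Set K)))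
  rw [← hWP] at hz
  obtain ⟨w, hwW, hwK, hwP⟩ := mem_closure_iff.mp
    (hK.subset_closure_diff hKc hKconn hPK hPc hPconn hPne z.2) W hW hz
  have hw : (⟨w, hwK⟩ : K) ∈ interior (Subtype.val ⁻¹' P) := hWP ▸ hwW
  exact hwP (interior_subset hw : (⟨w, hwK⟩ : K) ∈ Subtype.val ⁻¹' P)

theorem isNowhereDense (hK : IndecomposableSet K) (hKc : IsCompact K)
    (hKconn : IsPreconnected K) (hPK : P ⊆ K) (hPc : IsCompact P) (hPconn : IsPreconnected P)
    (hPne : P ≠ K) : IsNowhereDense P := by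
  simpa [inter_eq_right.mpr hPK] using
    (hK.isNowhereDense_preimage_val hKc hKconn hPK hPc hPconn hPne).image_val

/-- By Baire, `K` is not covered by the countably many proper subcontinua
`connectedComponentIn (K \ U) y`, `U` running over a countable basis. -/
theorem composant_ne [SecondCountableTopology X] (hK : IndecomposableSet K) (hKc : IsCompact K)
    (hKconn : IsConnected K) (y : X) : Composant K y ≠ K := by
  intro hCK
  obtain ⟨B, hBc, -, hB⟩ := TopologicalSpace.exists_countable_basis X
  let ι := {U : Set X // U ∈ B ∧ (U ∩ K).Nonempty}
  have : Countable ι := (hBc.mono fun _ hU => hU.1).to_subtype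
  let G : ι → Set X := fun U => connectedComponentIn (K \ U.1) y
  have hGK : ∀ U, G U ⊆ K := fun U => (connectedComponentIn_subset _ _).trans sdiff_subset
  have hGc : ∀ U, IsClosed (G U) := fun U =>
    (hKc.isClosed.sdiff (hB.isOpen U.2.1)).connectedComponentIn y
  have hGne : ∀ U, G U ≠ K := fun U h => by
    obtain ⟨u, huU, huK⟩ := U.2.2
    exact (connectedComponentIn_subset _ _ (h ▸ huK : u ∈ G U)).2 huU
  have hcover : ⋃ U, (Subtype.val ⁻¹' G U : Set K) = univ := by
    refine eq_univ_of_forall fun z => ?_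
    obtain ⟨P, ⟨hPK, hPc, hPconn, hyP, hPne⟩, hzP⟩ : z.1 ∈ Composant K y := by
      rw [hCK]; exact z.2
    obtain ⟨k, hkK, hkP⟩ := not_subset.mp fun h => hPne (hPK.antisymm h)
    obtain ⟨U, hUB, hkU, hUP⟩ := hB.exists_subset_of_mem_open hkP hPc.isClosed.isOpen_compl
    exact mem_iUnion.mpr ⟨⟨U, hUB, k, hkU, hkK⟩,
      hPconn.2.subset_connectedComponentIn (F := K \ U) hyP
        (fun p hp => ⟨hPK hp, fun hpU => hUP hpU hp⟩) hzP⟩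
  have : CompactSpace K := isCompact_iff_compactSpace.mp hKc
  have : Nonempty K := hKconn.nonempty.to_subtype
  obtain ⟨U, hU⟩ := nonempty_interior_of_iUnion_of_closed
    (fun U => (hGc U).preimage continuous_subtype_val) hcover
  refine hU.ne_empty (((hGc U).preimage continuous_subtype_val).isNowhereDense_iff.mp ?_)
  exact hK.isNowhereDense_preimage_val hKc hKconn.2 (hGK U) (hKc.of_isClosed_subset (hGc U) (hGK U))
    isPreconnected_connectedComponentIn (hGne U)

theorem not_isClosed_composant [SecondCountableTopology X] (hK : IndecomposableSet K)
    (hKc : IsCompact K) (hKconn : IsConnected K) {y : X} (hy : y ∈ Composant K y) :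
    ¬ IsClosed (Composant K y) := fun hcl =>
  hK.composant_ne hKc hKconn y (composant_eq_of_isClosed hKc hKconn.2 hy hcl)

end IndecomposableSet

end Continua

section MeagerComposant

variable {X : Type} [TopologicalSpace X] [T2Space X] {K : Set X} {x y : X}

theorem IndecomposableSet.composant_subset_meagerComposant (hK : IndecomposableSet K)
    (hKc : IsCompact K) (hKconn : IsPreconnected K) (hy : y ∈ MeagerComposant X x) :
    Composant K y ⊆ MeagerComposant X x := by
  rintro z ⟨P, ⟨hPK, hPc, hPconn, hyP, hPne⟩, hzP⟩
  obtain ⟨L, ⟨hLc, hLconn, hLnwd, hxL⟩, hyL⟩ := hy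
  exact ⟨L ∪ P, ⟨hLc.union hPc, IsConnected.union ⟨y, hyL, hyP⟩ hLconn hPconn,
    hLnwd.union (hK.isNowhereDense hKc hKconn hPK hPc hPconn.2 hPne), Or.inl hxL⟩, Or.inr hzP⟩

theorem meagerComposant_inter_subset_composant (hX : HereditarilyUnicoherent X)
    (hKc : IsCompact K) (hKconn : IsConnected K) (hKint : (interior K).Nonempty)
    (hy : y ∈ MeagerComposant X x) (hyK : y ∈ K) :
    MeagerComposant X x ∩ K ⊆ Composant K y := by
  rintro z ⟨⟨L₁, ⟨hL₁c, hL₁conn, hL₁nwd, hxL₁⟩, hzL₁⟩, hzK⟩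
  obtain ⟨L₀, ⟨hL₀c, hL₀conn, hL₀nwd, hxL₀⟩, hyL₀⟩ := hy
  have hLc : IsCompact (L₀ ∪ L₁) := hL₀c.union hL₁c
  have hLconn : IsConnected (L₀ ∪ L₁) := IsConnected.union ⟨x, hxL₀, hxL₁⟩ hL₀conn hL₁conn
  have hne : (L₀ ∪ L₁) ∩ K ≠ K := fun h => hKint.ne_empty <| subset_empty_iff.mp <|
    (hL₀nwd.union hL₁nwd) ▸ interior_mono ((inter_eq_right.mp h).trans subset_closure)
  exact ⟨(L₀ ∪ L₁) ∩ K, ⟨inter_subset_right, hLc.inter_right hKc.isClosed,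
    ⟨⟨y, Or.inl hyL₀, hyK⟩, hX _ _ hLc hLconn hKc hKconn⟩, ⟨Or.inl hyL₀, hyK⟩, hne⟩,
    Or.inr hzL₁, hzK⟩

end MeagerComposant

theorem meagerComposant_inter_indecomposable_general (X : Type) [MetricSpace X] [CompactSpace X]
    (hX : HereditarilyUnicoherent X) (x : X) (K : Set X)
    (hKc : IsCompact K) (hKconn : IsConnected K) (hKind : IndecomposableSet K)
    (hKint : (interior K).Nonempty) (hmeet : (MeagerComposant X x ∩ K).Nonempty) :
    (∃ y ∈ K, MeagerComposant X x ∩ K = Composant K y) ∧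
      ¬ IsClosed (MeagerComposant X x) := by
  obtain ⟨y, hyM, hyK⟩ := hmeet
  have hMK : MeagerComposant X x ∩ K = Composant K y :=
    (meagerComposant_inter_subset_composant hX hKc hKconn hKint hyM hyK).antisymm
      (subset_inter (hKind.composant_subset_meagerComposant hKc hKconn.2 hyM)
        (composant_subset K y))
  refine ⟨⟨y, hyK, hMK⟩, fun hcl => hKind.not_isClosed_composant (y := y) hKc hKconn ?_ ?_⟩
  · exact hMK ▸ ⟨hyM, hyK⟩
  · exact hMK ▸ hcl.inter hKc.isClosed

/-- If `K` is an indecomposable subcontinuum with interior of a hereditarily unicoherent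
continuum and `M_x` meets `K`, then `M_x ∩ K` is a composant of `K`; in particular `M_x`
is not closed. -/
theorem meagerComposant_inter_indecomposable (X : Type) [MetricSpace X] [CompactSpace X] [ConnectedSpace X] [Nonempty X]
    (hX : HereditarilyUnicoherent X) (x : X) (K : Set X)
    (hKc : IsCompact K) (hKconn : IsConnected K) (hKind : IndecomposableSet K)
    (hKint : (interior K).Nonempty) (hmeet : (MeagerComposant X x ∩ K).Nonempty) :
    (∃ y ∈ K, MeagerComposant X x ∩ K = Composant K y) ∧
      ¬ IsClosed (MeagerComposant X x) :=
  meagerComposant_inter_indecomposable_general X hX x K hKc hKconn hKind hKint hmeet
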